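/- (Distribution of the time to ruin, zero initial surplus.) Assume λ_{ij}(0) > 0 for all i,j ∈ E, Λ(0) is invertible, and the environment chain is stationary with distribution π. With initial surplus x = 0, the matrix of ruin-time probabilities (with (i,j)-entry the probability of {τ_0^− = n, J_n = j} started from state i) satisfies: P(τ_0^− = 1, J_1) = P − Λ(0), and for every n > 1, P(τ_0^− = n, J_n) = Σ_{x=1}^{n−1} V(n−1, x)·P − Σ_{x=1}^{n} V(n, x). -/

import Mathlib

/-!
Let `survM Λ n` be the matrix of probabilities that the surplus `k - S_k`, started at `0`, stays
positive at the times `1, …, n` and the environment ends in state `j`. Ruin at time `m + 1`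
means survival up to time `m` but not at time `m + 1`, and by the Markov property at the last
step, surviving up to time `m` and being in state `j` at time `m + 1` has probability
`(survM Λ m * P) i j`. Hence `ruinM Λ 0 (m + 1) = survM Λ m * P - survM Λ (m + 1)`, with
`survM Λ 0 = 1` and `survM Λ 1 = Λ 0`.

Along a path `J` and its time reversal, the products of the transition weights of `lamTilde Λ π`
and of `Λ` differ by the factor `π (J 0) / π (J n)`, which the factor `π j / π i` in `Vmat`
cancels. Reversal also turns "the surplus stays positive up to time `n` and ends at `a`" into
"the reversed surplus first reaches `a` at time `n`" (it rises by at most one per step). Summing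
over the levels `a = 1, …, n` therefore gives `∑ a, Vmat Λ π n a = survM Λ n`.
-/

open scoped BigOperators

noncomputable section

namespace CMB

/-- The weight that the compound Markov binomial model with horizon `n`, jump matrices `Λ`
and initial distribution `μ` assigns to the path `(J, C)`. -/
def pathWeight {N : ℕ} (Λ : ℕ → Matrix (Fin N) (Fin N) ℝ) (μ : Fin N → ℝ) (n : ℕ)
    (J : Fin (n + 1) → Fin N) (C : Fin n → ℕ) : ℝ :=
  μ (J 0) * ∏ k : Fin n, Λ (C k) (J k.castSucc) (J k.succ)

/-- The probability of the event `A` in the horizon-`n` compound Markov binomial model: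
the sum of the weights of the paths belonging to the event. -/
def prob {N : ℕ} (Λ : ℕ → Matrix (Fin N) (Fin N) ℝ) (μ : Fin N → ℝ) (n : ℕ)
    (A : (Fin (n + 1) → Fin N) → (Fin n → ℕ) → Prop) : ℝ :=
  ∑' p : { p : (Fin (n + 1) → Fin N) × (Fin n → ℕ) // A p.1 p.2 },
    pathWeight Λ μ n p.1.1 p.1.2

/-- Partial sums `S_k = C_1 + ⋯ + C_k` of the claims (`C i` is claim number `i+1`). -/
def S {n : ℕ} (C : Fin n → ℕ) (k : ℕ) : ℕ :=
  ∑ j : Fin n, if (j : ℕ) < k then C j else 0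

/-- Dirac initial distribution `δ_i`. -/
def delta {N : ℕ} (i : Fin N) : Fin N → ℝ := fun i' => if i' = i then 1 else 0

/-- `hitM Λ n a i j` is the probability, in the model with initial distribution `δ_i` and
initial surplus `x = 0` (so `X_k = k - S_k`), of the event `{τ_a^+ = n, J_n = j}`,
i.e. `X_k < a` for all `k < n` and `X_n ≥ a` and `J_n = j`. -/
def hitM {N : ℕ} (Λ : ℕ → Matrix (Fin N) (Fin N) ℝ) (n a : ℕ) : Matrix (Fin N) (Fin N) ℝ :=
  fun i j => prob Λ (delta i) n fun J C =>
    (∀ k, k < n → (k : ℤ) - S C k < (a : ℤ)) ∧ (a : ℤ) ≤ (n : ℤ) - S C n ∧ J (Fin.last n) = j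

/-- Jump matrices `Λ̃(m)`, with `λ̃_{ij}(m) = (π_j/π_i)·λ_{ji}(m)`, of the time-reversed model. -/
def lamTilde {N : ℕ} (Λ : ℕ → Matrix (Fin N) (Fin N) ℝ) (π : Fin N → ℝ) :
    ℕ → Matrix (Fin N) (Fin N) ℝ := fun m i j => π j / π i * Λ m j i

/-- `V(n,a) := Δ_π⁻¹ · M̃(n,a)ᵀ · Δ_π`, where `M̃(n,a)` is the matrix of first-passage
probabilities of the time-reversed model. -/
def Vmat {N : ℕ} (Λ : ℕ → Matrix (Fin N) (Fin N) ℝ) (π : Fin N → ℝ) (n a : ℕ) :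
    Matrix (Fin N) (Fin N) ℝ := fun i j => π j / π i * hitM (lamTilde Λ π) n a j i

/-- `ruinM Λ x n i j` is the probability of `{τ_0^- = n, J_n = j}` started from state `i`
with initial surplus `x` (so `X_k = x + k - S_k`): `X_k > 0` for `1 ≤ k < n` and `X_n ≤ 0`. -/
def ruinM {N : ℕ} (Λ : ℕ → Matrix (Fin N) (Fin N) ℝ) (x : ℕ) (n : ℕ) :
    Matrix (Fin N) (Fin N) ℝ := fun i j => prob Λ (delta i) n fun J C =>
      (∀ k, 1 ≤ k → k < n → 0 < (x : ℤ) + k - S C k) ∧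
      (x : ℤ) + n - S C n ≤ 0 ∧ J (Fin.last n) = j

abbrev Path (N n : ℕ) := (Fin (n + 1) → Fin N) × (Fin n → ℕ)

theorem summable_pi_prod_of_nonneg {α : Type*} {n : ℕ} (f : Fin n → α → ℝ) (hf₀ : ∀ k a, 0 ≤ f k a)
    (hf : ∀ k, Summable (f k)) : Summable fun x : Fin n → α => ∏ k, f k (x k) := by
  induction n with
  | zero => exact Summable.of_finite
  | succ n ih =>
    have htail := ih (fun k => f k.succ) (fun k a => hf₀ _ a) (fun k => hf _)
    have hprod := (hf 0).mul_of_nonneg htail (fun a => hf₀ 0 a)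
      (fun x => Finset.prod_nonneg fun k _ => hf₀ _ _)
    refine ((Fin.consEquiv fun _ => α).symm.summable_iff.2 hprod).congr fun x => ?_
    simp [Fin.prod_univ_succ, Fin.tail]

theorem prod_castSucc_div_succ {K : Type*} [CommGroupWithZero K] {n : ℕ} (f : Fin (n + 1) → K)
    (hf : ∀ i, f i ≠ 0) : ∏ i : Fin n, f i.castSucc / f i.succ = f 0 / f (Fin.last n) := by
  induction n with
  | zero => simp [div_self (hf 0)]
  | succ n ih =>
    have := ih (fun i => f i.castSucc) fun i => hf _
    simp only [← Fin.succ_castSucc] at this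
    rw [Fin.prod_univ_castSucc, this, Fin.succ_last, div_mul_div_cancel₀ (hf _)]
    rfl

section PathSpace

variable {N n m : ℕ} {Λ : ℕ → Matrix (Fin N) (Fin N) ℝ} {μ : Fin N → ℝ}

lemma delta_nonneg (i l : Fin N) : 0 ≤ delta i l := by
  unfold delta; split_ifs <;> norm_num

lemma pathWeight_nonneg (hΛ : ∀ m i j, 0 ≤ Λ m i j) (hμ : ∀ i, 0 ≤ μ i)
    (J : Fin (n + 1) → Fin N) (C : Fin n → ℕ) : 0 ≤ pathWeight Λ μ n J C :=
  mul_nonneg (hμ _) (Finset.prod_nonneg fun _ _ => hΛ _ _ _)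

lemma summable_pathWeight (hΛ : ∀ m i j, 0 ≤ Λ m i j) (hΛs : ∀ i j, Summable fun m => Λ m i j)
    (hμ : ∀ i, 0 ≤ μ i) : Summable fun p : Path N n => pathWeight Λ μ n p.1 p.2 := by
  refine (summable_prod_of_nonneg fun p => pathWeight_nonneg hΛ hμ p.1 p.2).2
    ⟨fun J => ?_, .of_finite⟩
  exact (summable_pi_prod_of_nonneg (fun k c => Λ c (J k.castSucc) (J k.succ)) (fun _ _ => hΛ _ _ _)
    fun _ => hΛs _ _).mul_left (μ (J 0))

open Classical in
lemma prob_eq_tsum_ite (A : (Fin (n + 1) → Fin N) → (Fin n → ℕ) → Prop) :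
    prob Λ μ n A = ∑' p : Path N n, if A p.1 p.2 then pathWeight Λ μ n p.1 p.2 else 0 :=
  (tsum_subtype {p : Path N n | A p.1 p.2} fun p => pathWeight Λ μ n p.1 p.2).trans
    (tsum_congr fun _ => Set.indicator_apply ..)

open Classical in
lemma summable_pathWeight_ite (hΛ : ∀ m i j, 0 ≤ Λ m i j)
    (hΛs : ∀ i j, Summable fun m => Λ m i j) (hμ : ∀ i, 0 ≤ μ i)
    (A : (Fin (n + 1) → Fin N) → (Fin n → ℕ) → Prop) :
    Summable fun p : Path N n => if A p.1 p.2 then pathWeight Λ μ n p.1 p.2 else 0 :=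
  ((summable_pathWeight hΛ hΛs hμ).indicator {p | A p.1 p.2}).congr
    fun _ => Set.indicator_apply ..

lemma prob_congr {A B : (Fin (n + 1) → Fin N) → (Fin n → ℕ) → Prop}
    (h : ∀ J C, A J C ↔ B J C) : prob Λ μ n A = prob Λ μ n B :=
  congrArg (prob Λ μ n) (funext₂ fun J C => propext (h J C))

lemma prob_add (hΛ : ∀ m i j, 0 ≤ Λ m i j) (hΛs : ∀ i j, Summable fun m => Λ m i j)
    (hμ : ∀ i, 0 ≤ μ i) {A B D : (Fin (n + 1) → Fin N) → (Fin n → ℕ) → Prop}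
    (hA : ∀ J C, A J C ↔ B J C ∨ D J C) (hBD : ∀ J C, B J C → ¬ D J C) :
    prob Λ μ n A = prob Λ μ n B + prob Λ μ n D := by
  classical
  rw [prob_eq_tsum_ite, prob_eq_tsum_ite, prob_eq_tsum_ite,
    ← (summable_pathWeight_ite hΛ hΛs hμ B).tsum_add (summable_pathWeight_ite hΛ hΛs hμ D)]
  refine tsum_congr fun ⟨J, C⟩ => ?_
  by_cases hB : B J C
  · simp [hA, hB, hBD J C hB]
  · simp [hA, hB]

lemma sum_prob_fiber (hΛ : ∀ m i j, 0 ≤ Λ m i j) (hΛs : ∀ i j, Summable fun m => Λ m i j)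
    (hμ : ∀ i, 0 ≤ μ i) {β : Type*} (s : Finset β)
    (B : (Fin (n + 1) → Fin N) → (Fin n → ℕ) → Prop) (f : (Fin (n + 1) → Fin N) → (Fin n → ℕ) → β)
    (hf : ∀ J C, B J C → f J C ∈ s) :
    ∑ b ∈ s, prob Λ μ n (fun J C => B J C ∧ f J C = b) = prob Λ μ n B := by
  classical
  simp only [prob_eq_tsum_ite]
  refine (Summable.tsum_finsetSum fun b _ =>
    summable_pathWeight_ite hΛ hΛs hμ fun J C => B J C ∧ f J C = b).symm.trans
    (tsum_congr fun ⟨J, C⟩ => ?_)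
  by_cases hB : B J C
  · simp [hB, hf J C hB]
  · simp [hB]

lemma pathWeight_snoc (J : Fin (m + 1) → Fin N) (C : Fin m → ℕ) (l : Fin N) (c : ℕ) :
    pathWeight Λ μ (m + 1) (Fin.snoc J l) (Fin.snoc C c) =
      pathWeight Λ μ m J C * Λ c (J (Fin.last m)) l := by
  simp [pathWeight, Fin.prod_univ_castSucc, mul_assoc, Fin.succ_castSucc, -Fin.castSucc_succ]

def snocEquiv (A : (Fin (m + 1) → Fin N) → (Fin m → ℕ) → Prop) (s : Set ℕ) (l j : Fin N) :
    {p : Path N (m + 1) // (A (Fin.init p.1) (Fin.init p.2) ∧ p.2 (Fin.last m) ∈ s ∧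
        p.1 (Fin.last (m + 1)) = j) ∧ p.1 (Fin.last m).castSucc = l} ≃
      {q : Path N m // A q.1 q.2 ∧ q.1 (Fin.last m) = l} × s where
  toFun p := (⟨(Fin.init p.1.1, Fin.init p.1.2), p.2.1.1, p.2.2⟩, ⟨p.1.2 (Fin.last m), p.2.1.2.1⟩)
  invFun x := ⟨(Fin.snoc x.1.1.1 j, Fin.snoc x.1.1.2 x.2), by
    simpa [Fin.init_snoc, x.2.2] using x.1.2⟩
  left_inv p := by
    obtain ⟨⟨J, C⟩, ⟨-, -, hJ⟩, -⟩ := p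
    simp [← hJ, Fin.snoc_init_self]
  right_inv x := by simp

lemma prob_snoc_eq_mul (hΛ : ∀ m i j, 0 ≤ Λ m i j) (hΛs : ∀ i j, Summable fun m => Λ m i j)
    (hμ : ∀ i, 0 ≤ μ i) (A : (Fin (m + 1) → Fin N) → (Fin m → ℕ) → Prop) (s : Set ℕ)
    (l j : Fin N) :
    prob Λ μ (m + 1) (fun J C => (A (Fin.init J) (Fin.init C) ∧ C (Fin.last m) ∈ s ∧
        J (Fin.last (m + 1)) = j) ∧ J (Fin.last m).castSucc = l) =
      prob Λ μ m (fun J C => A J C ∧ J (Fin.last m) = l) * ∑' c : s, Λ c l j := by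
  have hq := (summable_pathWeight (n := m) hΛ hΛs hμ).subtype fun q =>
    A q.1 q.2 ∧ q.1 (Fin.last m) = l
  have hc := (hΛs l j).subtype s
  calc _ = ∑' x, pathWeight Λ μ (m + 1) ((snocEquiv A s l j).symm x).1.1
        ((snocEquiv A s l j).symm x).1.2 := ((snocEquiv A s l j).symm.tsum_eq _).symm
    _ = ∑' x : _ × s, pathWeight Λ μ m x.1.1.1 x.1.1.2 * Λ x.2 l j :=
        tsum_congr fun x => by simp [snocEquiv, pathWeight_snoc, x.1.2.2]
    _ = _ := (hq.tsum_mul_tsum hc (hq.mul_of_nonneg hc (fun _ => pathWeight_nonneg hΛ hμ _ _)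
        fun _ => hΛ _ _ _)).symm

lemma prob_snoc (hΛ : ∀ m i j, 0 ≤ Λ m i j) (hΛs : ∀ i j, Summable fun m => Λ m i j)
    (hμ : ∀ i, 0 ≤ μ i) (A : (Fin (m + 1) → Fin N) → (Fin m → ℕ) → Prop) (s : Set ℕ)
    (j : Fin N) :
    prob Λ μ (m + 1) (fun J C => A (Fin.init J) (Fin.init C) ∧ C (Fin.last m) ∈ s ∧
        J (Fin.last (m + 1)) = j) =
      ∑ l, prob Λ μ m (fun J C => A J C ∧ J (Fin.last m) = l) * ∑' c : s, Λ c l j := by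
  rw [← sum_prob_fiber hΛ hΛs hμ Finset.univ _ (fun J _ => J (Fin.last m).castSucc)
    fun _ _ _ => Finset.mem_univ _]
  exact Finset.sum_congr rfl fun l _ => prob_snoc_eq_mul hΛ hΛs hμ A s l j

lemma prob_horizon_zero (l : Fin N) : prob Λ μ 0 (fun J _ => J 0 = l) = μ l := by
  rw [prob, tsum_eq_single ⟨(fun _ => l, Fin.elim0), rfl⟩]
  · simp [pathWeight]
  · rintro ⟨⟨J, C⟩, hJ⟩ hne
    refine absurd (Subtype.ext (Prod.ext (funext fun k => ?_) (Subsingleton.elim _ _))) hne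
    rw [Subsingleton.elim (α := Fin 1) k 0]
    exact hJ

def pathRev : Path N n ≃ Path N n where
  toFun p := (p.1 ∘ Fin.rev, p.2 ∘ Fin.rev)
  invFun p := (p.1 ∘ Fin.rev, p.2 ∘ Fin.rev)
  left_inv p := by simp [Function.comp_def]
  right_inv p := by simp [Function.comp_def]

lemma pathWeight_lamTilde_rev {π : Fin N → ℝ} (hπ : ∀ i, π i ≠ 0) (J : Fin (n + 1) → Fin N)
    (C : Fin n → ℕ) :
    pathWeight (lamTilde Λ π) μ n (J ∘ Fin.rev) (C ∘ Fin.rev) =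
      μ (J (Fin.last n)) * (π (J 0) / π (J (Fin.last n))) *
        ∏ k, Λ (C k) (J k.castSucc) (J k.succ) := by
  have hrev : ∏ k : Fin n, lamTilde Λ π (C k.rev) (J k.castSucc.rev) (J k.succ.rev) =
      π (J 0) / π (J (Fin.last n)) * ∏ k, Λ (C k) (J k.castSucc) (J k.succ) := by
    simp only [lamTilde, Fin.rev_succ, Fin.rev_castSucc]
    refine (Equiv.prod_comp Fin.revPerm fun k =>
      π (J k.castSucc) / π (J k.succ) * Λ (C k) (J k.castSucc) (J k.succ)).trans ?_
    rw [Finset.prod_mul_distrib, prod_castSucc_div_succ (fun k => π (J k)) fun k => hπ _]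
  simp only [pathWeight, Function.comp_apply, Fin.rev_zero, hrev, mul_assoc]

lemma prob_lamTilde_rev {π : Fin N → ℝ} (hπ : ∀ i, π i ≠ 0)
    (A : (Fin (n + 1) → Fin N) → (Fin n → ℕ) → Prop) (i j : Fin N) :
    π j / π i * prob (lamTilde Λ π) (delta j) n (fun J C => A J C ∧ J (Fin.last n) = i) =
      prob Λ (delta i) n (fun J C => A (J ∘ Fin.rev) (C ∘ Fin.rev) ∧ J (Fin.last n) = j) := by
  classical
  rw [prob_eq_tsum_ite, prob_eq_tsum_ite, ← tsum_mul_left, ← pathRev.tsum_eq]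
  refine tsum_congr fun ⟨J, C⟩ => ?_
  simp only [pathRev, Equiv.coe_fn_mk, Function.comp_apply, Fin.rev_last,
    pathWeight_lamTilde_rev hπ]
  by_cases hA : A (J ∘ Fin.rev) (C ∘ Fin.rev)
  · by_cases hJ0 : J 0 = i <;> by_cases hJl : J (Fin.last n) = j <;>
      simp [hA, hJ0, hJl, pathWeight, delta]
    field_simp [hπ i, hπ j]
  · simp [hA]

end PathSpace

section Surplus

variable {n m : ℕ}

lemma S_zero (C : Fin n → ℕ) : S C 0 = 0 := by
  simp [S]

lemma S_init (C : Fin (m + 1) → ℕ) {k : ℕ} (hk : k ≤ m) : S (Fin.init C) k = S C k := by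
  have : ¬ m < k := by omega
  simp only [S, Fin.sum_univ_castSucc, Fin.val_castSucc, Fin.val_last, this, if_false, add_zero]
  rfl

lemma S_comp_rev (C : Fin n → ℕ) {k : ℕ} (hk : k ≤ n) :
    S (C ∘ Fin.rev) k + S C (n - k) = S C n := by
  rw [S, ← Equiv.sum_comp Fin.revPerm, S, S, ← Finset.sum_add_distrib]
  refine Finset.sum_congr rfl fun j _ => ?_
  simp only [Fin.revPerm_apply, Function.comp_apply, Fin.rev_rev, Fin.val_rev]
  split_ifs <;> omega

def Survives (C : Fin n → ℕ) (m : ℕ) : Prop :=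
  ∀ k, 1 ≤ k → k ≤ m → S C k < k

lemma survives_zero (C : Fin n → ℕ) : Survives C 0 :=
  fun _ h₁ h₂ => absurd h₂ (by omega)

lemma survives_succ_iff (C : Fin n → ℕ) :
    Survives C (m + 1) ↔ Survives C m ∧ S C (m + 1) < m + 1 := by
  refine ⟨fun h => ⟨fun k h₁ h₂ => h k h₁ (by omega), h _ (by omega) le_rfl⟩,
    fun ⟨h, hlast⟩ k h₁ h₂ => ?_⟩
  rcases Nat.lt_or_eq_of_le h₂ with h₂ | rfl
  exacts [h k h₁ (by omega), hlast]

lemma survives_init_iff (C : Fin (m + 1) → ℕ) : Survives (Fin.init C) m ↔ Survives C m :=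
  forall_congr' fun k => imp_congr_right fun _ => imp_congr_right fun hk => by rw [S_init C hk]

lemma survives_one_iff (C : Fin 1 → ℕ) : Survives C 1 ↔ C 0 = 0 := by
  have hS : S C 1 = C 0 := by simp [S]
  refine ⟨fun h => by have := h 1 le_rfl le_rfl; omega, fun h k h₁ h₂ => ?_⟩
  obtain rfl : k = 1 := by omega
  omega

lemma ruin_zero_iff (C : Fin n → ℕ) (m : ℕ) :
    ((∀ k, 1 ≤ k → k < m + 1 → 0 < ((0 : ℕ) : ℤ) + k - S C k) ∧
        ((0 : ℕ) : ℤ) + (m + 1 : ℕ) - S C (m + 1) ≤ 0) ↔ Survives C m ∧ m + 1 ≤ S C (m + 1) :=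
  ⟨fun ⟨h, hlast⟩ => ⟨fun k h₁ h₂ => by have := h k h₁ (by omega); omega, by omega⟩,
    fun ⟨h, hlast⟩ => ⟨fun k h₁ h₂ => by have := h k h₁ (by omega); omega, by omega⟩⟩

lemma hits_rev_iff {a : ℕ} (ha : 1 ≤ a) (C : Fin n → ℕ) :
    ((∀ k, k < n → (k : ℤ) - S (C ∘ Fin.rev) k < a) ∧ (a : ℤ) ≤ n - S (C ∘ Fin.rev) n) ↔
      Survives C n ∧ n - S C n = a := by
  have hS : ∀ k ≤ n, (S (C ∘ Fin.rev) k : ℤ) = S C n - S C (n - k) := fun k hk => by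
    have := S_comp_rev C hk; omega
  have hSn : (S (C ∘ Fin.rev) n : ℤ) = S C n := by
    rw [hS n le_rfl, Nat.sub_self, S_zero]; simp
  rw [hSn]
  constructor
  · rintro ⟨h₁, h₂⟩
    have hlast := h₁ (n - 1) (by omega)
    rw [hS _ (by omega)] at hlast
    refine ⟨fun k hk₁ hk₂ => ?_, by omega⟩
    have hk := h₁ (n - k) (by omega)
    rw [hS _ (by omega), Nat.sub_sub_self hk₂] at hk
    omega
  · rintro ⟨hsurv, rfl⟩
    have hpos := hsurv n (by omega) le_rfl
    refine ⟨fun k hk => ?_, by omega⟩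
    have := hsurv (n - k) (by omega) (by omega)
    rw [hS k hk.le]
    omega

end Surplus

section Matrices

variable {N n : ℕ} {Λ : ℕ → Matrix (Fin N) (Fin N) ℝ}

def survM (Λ : ℕ → Matrix (Fin N) (Fin N) ℝ) (n : ℕ) : Matrix (Fin N) (Fin N) ℝ :=
  fun i j => prob Λ (delta i) n fun J C => Survives C n ∧ J (Fin.last n) = j

lemma survM_zero : survM Λ 0 = 1 := by
  ext i j
  rw [survM, prob_congr fun J C => and_iff_right (survives_zero C)]
  exact (prob_horizon_zero j).trans (by simp [delta, Matrix.one_apply, eq_comm])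

lemma survM_one (hΛ : ∀ m i j, 0 ≤ Λ m i j) (hΛs : ∀ i j, Summable fun m => Λ m i j) :
    survM Λ 1 = Λ 0 := by
  ext i j
  rw [survM, prob_congr (B := fun J C => True ∧ C (Fin.last 0) ∈ ({0} : Set ℕ) ∧
      J (Fin.last 1) = j) fun J C => by simp [survives_one_iff],
    prob_snoc (m := 0) hΛ hΛs (delta_nonneg i) (fun _ _ => True) {0} j]
  simp [prob_horizon_zero, delta]

lemma ruinM_zero_succ (hΛ : ∀ m i j, 0 ≤ Λ m i j) {P : Matrix (Fin N) (Fin N) ℝ}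
    (hP : ∀ i j, HasSum (fun m => Λ m i j) (P i j)) (m : ℕ) :
    ruinM Λ 0 (m + 1) = survM Λ m * P - survM Λ (m + 1) := by
  have hΛs : ∀ i j, Summable fun m => Λ m i j := fun i j => (hP i j).summable
  ext i j
  have hsplit : prob Λ (delta i) (m + 1) (fun J C => Survives C m ∧ J (Fin.last (m + 1)) = j) =
      ruinM Λ 0 (m + 1) i j + survM Λ (m + 1) i j := by
    refine prob_add hΛ hΛs (delta_nonneg i) (fun J C => ?_) (fun J C => ?_) <;>
    · have hruin := ruin_zero_iff C m
      have hsurv : Survives C (m + 1) ↔ Survives C m ∧ ¬ m + 1 ≤ S C (m + 1) := by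
        rw [survives_succ_iff, not_le]
      tauto
  have hmarkov : prob Λ (delta i) (m + 1) (fun J C => Survives C m ∧ J (Fin.last (m + 1)) = j) =
      (survM Λ m * P) i j := by
    rw [prob_congr (B := fun J C => Survives (Fin.init C) m ∧ C (Fin.last m) ∈ Set.univ ∧
        J (Fin.last (m + 1)) = j) fun J C => by simp [survives_init_iff],
      prob_snoc hΛ hΛs (delta_nonneg i) (fun _ C => Survives C m) Set.univ j]
    refine Finset.sum_congr rfl fun l _ => ?_
    rw [tsum_univ (fun c => Λ c l j), (hP l j).tsum_eq]
    rfl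
  rw [Matrix.sub_apply]
  linarith

lemma sum_Vmat_eq_survM (hΛ : ∀ m i j, 0 ≤ Λ m i j) (hΛs : ∀ i j, Summable fun m => Λ m i j)
    {π : Fin N → ℝ} (hπ : ∀ i, π i ≠ 0) (hn : 1 ≤ n) :
    ∑ a ∈ Finset.Icc 1 n, Vmat Λ π n a = survM Λ n := by
  ext i j
  rw [Matrix.sum_apply]
  calc _ = ∑ a ∈ Finset.Icc 1 n, prob Λ (delta i) n
        (fun J C => (Survives C n ∧ J (Fin.last n) = j) ∧ n - S C n = a) :=
        Finset.sum_congr rfl fun a ha => by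
          rw [Vmat, hitM, prob_congr fun J C => and_assoc.symm, prob_lamTilde_rev hπ]
          exact prob_congr fun J C => by
            rw [hits_rev_iff (Finset.mem_Icc.1 ha).1]
            tauto
    _ = survM Λ n i j := sum_prob_fiber hΛ hΛs (delta_nonneg i) _ _ _ fun J C h =>
        Finset.mem_Icc.2 ⟨by have := h.1 n hn le_rfl; omega, by omega⟩

end Matrices

theorem ruin_time_distribution_zero_general
    {N : ℕ}
    (Λ : ℕ → Matrix (Fin N) (Fin N) ℝ) (P : Matrix (Fin N) (Fin N) ℝ)
    (hΛ : ∀ m i j, 0 ≤ Λ m i j)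
    (hP : ∀ i j, HasSum (fun m => Λ m i j) (P i j))
    (π : Fin N → ℝ) (hπpos : ∀ i, 0 < π i) :
    ruinM Λ 0 1 = P - Λ 0 ∧
      ∀ n, 1 < n → ruinM Λ 0 n =
        (∑ x ∈ Finset.Icc 1 (n - 1), Vmat Λ π (n - 1) x * P) -
          ∑ x ∈ Finset.Icc 1 n, Vmat Λ π n x := by
  have hΛs : ∀ i j, Summable fun m => Λ m i j := fun i j => (hP i j).summable
  have hπ : ∀ i, π i ≠ 0 := fun i => (hπpos i).ne'
  refine ⟨?_, fun n hn => ?_⟩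
  · rw [ruinM_zero_succ hΛ hP 0, survM_zero, survM_one hΛ hΛs, one_mul]
  · obtain ⟨m, rfl⟩ : ∃ m, n = m + 1 := ⟨n - 1, by omega⟩
    rw [ruinM_zero_succ hΛ hP, Nat.add_sub_cancel, ← Finset.sum_mul,
      sum_Vmat_eq_survM hΛ hΛs hπ (by omega), sum_Vmat_eq_survM hΛ hΛs hπ (by omega)]

/-- Distribution of the time to ruin, zero initial surplus.  Assume
`λ_{ij}(0) > 0`, `Λ(0)` invertible, and the environment chain stationary with distribution
`π`.  With `x = 0`, the matrix of ruin-time probabilities satisfies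
`P(τ_0^- = 1, J_1) = P − Λ(0)` and, for `n > 1`,
`P(τ_0^- = n, J_n) = Σ_{x=1}^{n−1} V(n−1,x)·P − Σ_{x=1}^{n} V(n,x)`. -/
theorem ruin_time_distribution_zero
    {N : ℕ} (hN : 1 ≤ N)
    (Λ : ℕ → Matrix (Fin N) (Fin N) ℝ) (P : Matrix (Fin N) (Fin N) ℝ)
    (hΛ : ∀ m i j, 0 ≤ Λ m i j)
    (hP : ∀ i j, HasSum (fun m => Λ m i j) (P i j))
    (hPstoch : ∀ i, ∑ j, P i j = 1)
    (π : Fin N → ℝ) (hπpos : ∀ i, 0 < π i) (hπsum : ∑ i, π i = 1)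
    (hπP : ∀ j, ∑ i, π i * P i j = π j)
    (hzero : ∀ i j, 0 < Λ 0 i j) (hinv : IsUnit (Λ 0)) :
    ruinM Λ 0 1 = P - Λ 0 ∧
      ∀ n, 1 < n → ruinM Λ 0 n =
        (∑ x ∈ Finset.Icc 1 (n - 1), Vmat Λ π (n - 1) x * P) -
          ∑ x ∈ Finset.Icc 1 n, Vmat Λ π n x :=
  ruin_time_distribution_zero_general Λ P hΛ hP π hπpos

end CMB
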